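/- arXiv:0806.3433 — 3 statements merged into one kernel-verified Lean document; each statement's English description precedes it below -/
import Mathlib

section
/- Let D = (P, B) be a symmetric 2-(v,k,λ) design (i.e., the number of blocks equals the number of points) with k ≥ λ + 2 (this excludes, in particular, the triangle, the 2-(3,2,1) design). Then the canonical map P → 𝔊_D, X ↦ X + R, is injective; that is, D is embeddable in the group 𝔊_D. -/
/-!
Suppose `of Y - of X = ∑ c_b • χ_b` with integers `c_b`, where `χ_b` is the sum of the points
of the block `b`. With `N` the block–point incidence matrix this reads `c N = e_Y - e_X`.
For a symmetric design `NᵀN = (k - λ) I + λ J` is invertible and `N` is square, so `c ↦ c N`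
is injective; since `J` kills vectors of coordinate sum zero, the solution is
`(k - λ) c = N (e_Y - e_X)`, a vector with entries in `{-1, 0, 1}`. As `k - λ ≥ 2` and `c` is
integral, `c = 0`, whence `e_Y = e_X`.
-/

open Finset Matrix

namespace Matrix

variable {K : Type*} [Field K] {m n : Type*} [Fintype m] [Fintype n] [DecidableEq n]

theorem vecMul_smul_one_add_smul_ones (a μ : K) (u : n → K) :
    u ᵥ* (a • 1 + μ • of fun _ _ => 1 : Matrix n n K) = a • u + fun _ => μ * ∑ j, u j := by
  rw [vecMul_add, vecMul_smul, vecMul_smul, vecMul_one]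
  ext i
  simp [vecMul, dotProduct, mul_sum]

theorem isUnit_smul_one_add_smul_ones [LinearOrder K] [IsStrictOrderedRing K] {a μ : K}
    (ha : 0 < a) (hμ : 0 ≤ μ) : IsUnit (a • 1 + μ • of fun _ _ => 1 : Matrix n n K) := by
  rw [isUnit_iff_isUnit_det, isUnit_iff_ne_zero, Ne, ← exists_vecMul_eq_zero_iff]
  rintro ⟨x, hx0, hx⟩
  rw [vecMul_smul_one_add_smul_ones] at hx
  have hxi (i : n) : a * x i + μ * ∑ j, x j = 0 := congrFun hx i
  have hsum : (a + μ * Fintype.card n) * ∑ j, x j = 0 := by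
    have := sum_congr rfl fun i (_ : i ∈ univ) => hxi i
    simp only [sum_add_distrib, ← mul_sum, sum_const, card_univ, nsmul_eq_mul] at this
    linear_combination this
  have hzero : ∑ j, x j = 0 := (mul_eq_zero.mp hsum).resolve_left (by positivity)
  exact hx0 <| funext fun i => by simpa [hzero, ha.ne'] using hxi i

theorem vecMul_injective_of_isUnit_transpose_mul_self [DecidableEq m] (e : m ≃ n)
    {N : Matrix m n K} (h : IsUnit (Nᵀ * N)) : Function.Injective (· ᵥ* N) := by
  have hNL : N * ((Nᵀ * N)⁻¹ * Nᵀ) = 1 := by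
    rw [mul_eq_one_comm_of_equiv e, Matrix.mul_assoc,
      nonsing_inv_mul _ ((isUnit_iff_isUnit_det _).mp h)]
  intro c c' hcc'
  simpa only [vecMul_vecMul, hNL, vecMul_one] using congrArg (· ᵥ* ((Nᵀ * N)⁻¹ * Nᵀ)) hcc'

theorem smul_eq_mulVec_of_vecMul_eq [LinearOrder K] [IsStrictOrderedRing K] [DecidableEq m]
    (e : m ≃ n) {N : Matrix m n K} {a μ : K} (ha : 0 < a) (hμ : 0 ≤ μ)
    (hN : Nᵀ * N = a • 1 + μ • of fun _ _ => 1) {c : m → K} {u : n → K}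
    (hu : ∑ j, u j = 0) (hc : c ᵥ* N = u) : a • c = N *ᵥ u := by
  apply vecMul_injective_of_isUnit_transpose_mul_self e (hN ▸ isUnit_smul_one_add_smul_ones ha hμ)
  calc (a • c) ᵥ* N = a • u := by rw [smul_vecMul, hc]
    _ = u ᵥ* (Nᵀ * N) := by
      rw [hN, vecMul_smul_one_add_smul_ones, hu, mul_zero, ← Pi.zero_def, add_zero]
    _ = (N *ᵥ u) ᵥ* N := by rw [← vecMul_vecMul, vecMul_transpose]

end Matrix

theorem Int.eq_zero_of_abs_mul_le_one {K : Type*} [Ring K] [LinearOrder K]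
    [IsStrictOrderedRing K] {a : K} (ha : 1 < a) {z : ℤ} (h : |a * z| ≤ 1) : z = 0 := by
  by_contra hz
  have hz1 : (1 : K) ≤ |(z : K)| := by exact_mod_cast Int.one_le_abs hz
  have ha0 : 0 < a := zero_lt_one.trans ha
  rw [abs_mul, abs_of_pos ha0] at h
  exact h.not_gt (ha.trans_le (le_mul_of_one_le_right ha0.le hz1))

section Design

variable {α : Type*} [DecidableEq α] {B : Finset (Finset α)} {k lam : ℕ} (R : Type*)

def incidenceMatrix [Zero R] [One R] (B : Finset (Finset α)) : Matrix B α R :=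
  of fun b p => if p ∈ (b : Finset α) then 1 else 0

theorem exists_vecMul_incidenceMatrix_eq_of_mem_closure [Ring R] {g : FreeAbelianGroup α}
    (hg : g ∈ AddSubgroup.closure {g | ∃ b ∈ B, g = ∑ p ∈ b, FreeAbelianGroup.of p}) :
    ∃ c : B → ℤ, (fun b => (c b : R)) ᵥ* incidenceMatrix R B =
      FreeAbelianGroup.lift (fun p => Pi.single p (1 : R)) g := by
  have hrange : {g | ∃ b ∈ B, g = ∑ p ∈ b, FreeAbelianGroup.of p} =
      Set.range fun b : B => ∑ p ∈ (b : Finset α), FreeAbelianGroup.of p := by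
    ext g; simp [eq_comm]
  rw [hrange, ← Submodule.span_int_eq_addSubgroupClosure, Submodule.mem_toAddSubgroup,
    Submodule.mem_span_range_iff_exists_fun] at hg
  obtain ⟨c, rfl⟩ := hg
  refine ⟨c, ?_⟩
  rw [vecMul_eq_sum, map_sum]
  refine sum_congr rfl fun b _ => ?_
  ext q
  simp [incidenceMatrix, Pi.single_apply]

variable [Fintype α]

theorem abs_incidenceMatrix_mulVec_single_sub_single_le_one [Ring R] [LinearOrder R]
    [IsStrictOrderedRing R] (X Y : α) (b : B) :
    |(incidenceMatrix R B *ᵥ (Pi.single Y 1 - Pi.single X 1)) b| ≤ 1 := by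
  rw [mulVec_sub, mulVec_single_one, mulVec_single_one]
  simp only [incidenceMatrix, Pi.sub_apply, col_apply, of_apply]
  split_ifs <;> norm_num

variable {R}

theorem card_filter_mem_mul_pred (hk : ∀ b ∈ B, b.card = k)
    (hlam : ∀ x y : α, x ≠ y → (B.filter (fun b => x ∈ b ∧ y ∈ b)).card = lam) (p : α) :
    (B.filter (p ∈ ·)).card * (k - 1) = (Fintype.card α - 1) * lam := by
  have := card_mul_eq_card_mul (fun b q => q ∈ b) (s := B.filter (p ∈ ·)) (t := univ.erase p)
    (m := k - 1) (n := lam) ?_ ?_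
  · simpa [card_erase_of_mem] using this
  · intro b hb
    rw [mem_filter] at hb
    have : (univ.erase p).bipartiteAbove (fun b q => q ∈ b) b = b.erase p := by
      ext q; simp [and_comm]
    rw [this, card_erase_of_mem hb.2, hk b hb.1]
  · intro q hq
    rw [bipartiteBelow, filter_filter]
    exact hlam p q (ne_of_mem_erase hq).symm

theorem card_filter_mem_eq_of_card_eq (hk : ∀ b ∈ B, b.card = k)
    (hlam : ∀ x y : α, x ≠ y → (B.filter (fun b => x ∈ b ∧ y ∈ b)).card = lam)
    (hsym : B.card = Fintype.card α) (hk2 : 2 ≤ k) (p : α) : (B.filter (p ∈ ·)).card = k := by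
  have hconst (q : α) : (B.filter (q ∈ ·)).card = (B.filter (p ∈ ·)).card :=
    Nat.eq_of_mul_eq_mul_right (by omega)
      ((card_filter_mem_mul_pred hk hlam q).trans (card_filter_mem_mul_pred hk hlam p).symm)
  have hcount := sum_card_bipartiteAbove_eq_sum_card_bipartiteBelow (fun b q => q ∈ b)
    (s := B) (t := univ)
  have habove : ∀ b ∈ B, (univ.bipartiteAbove (fun b q => q ∈ b) b).card = k := by
    intro b hb; simp [bipartiteAbove, hk b hb]
  rw [sum_congr rfl habove] at hcount
  simp only [bipartiteBelow, hconst, sum_const, card_univ, smul_eq_mul, hsym] at hcount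
  exact (Nat.eq_of_mul_eq_mul_left (Fintype.card_pos_iff.mpr ⟨p⟩) hcount).symm

variable (R)

theorem transpose_incidenceMatrix_mul_self [Ring R] (hk : ∀ b ∈ B, b.card = k)
    (hlam : ∀ x y : α, x ≠ y → (B.filter (fun b => x ∈ b ∧ y ∈ b)).card = lam)
    (hsym : B.card = Fintype.card α) (hk2 : 2 ≤ k) :
    (incidenceMatrix R B)ᵀ * incidenceMatrix R B =
      ((k : R) - lam) • 1 + (lam : R) • of fun _ _ => 1 := by
  ext p q
  have hpq : ((incidenceMatrix R B)ᵀ * incidenceMatrix R B) p q =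
      (B.filter (fun b => p ∈ b ∧ q ∈ b)).card := by
    simp only [incidenceMatrix, mul_apply, transpose_apply, of_apply, mul_boole, ← ite_and]
    rw [sum_coe_sort B fun b => if q ∈ b ∧ p ∈ b then (1 : R) else 0, sum_boole]
    simp only [and_comm]
  rw [hpq]
  obtain rfl | hne := eq_or_ne p q
  · simp [card_filter_mem_eq_of_card_eq hk hlam hsym hk2 p]
  · simp [hlam p q hne, hne]

end Design

/-- A symmetric 2-(v,k,λ) design (number of blocks = number of points)
with k ≥ λ + 2 is embeddable in 𝔊_D: the canonical map P → 𝔊_D is injective. -/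
theorem stmt_4 {α : Type*} [Fintype α] [DecidableEq α]
    (B : Finset (Finset α)) (v k lam : ℕ)
    (hv : Fintype.card α = v)
    (hsym : B.card = v)
    (hk : ∀ b ∈ B, b.card = k)
    (hlam : ∀ x y : α, x ≠ y → (B.filter (fun b => x ∈ b ∧ y ∈ b)).card = lam)
    (hkl : lam + 2 ≤ k)
    (R : AddSubgroup (FreeAbelianGroup α))
    (hR : R = AddSubgroup.closure {g | ∃ b ∈ B, g = ∑ p ∈ b, FreeAbelianGroup.of p}) :
    Function.Injective (fun X : α =>
      (QuotientAddGroup.mk (FreeAbelianGroup.of X) : FreeAbelianGroup α ⧸ R)) := by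
  intro X Y hXY
  by_contra hne
  rw [QuotientAddGroup.eq, hR] at hXY
  obtain ⟨c, hc⟩ := exists_vecMul_incidenceMatrix_eq_of_mem_closure ℚ hXY
  set u : α → ℚ := Pi.single Y 1 - Pi.single X 1 with hu
  replace hc : (fun b => (c b : ℚ)) ᵥ* incidenceMatrix ℚ B = u := by
    rw [hc, hu, map_add, map_neg, FreeAbelianGroup.lift_apply_of, FreeAbelianGroup.lift_apply_of,
      neg_add_eq_sub]
  have hcard : B.card = Fintype.card α := hsym.trans hv.symm
  have hkl' : (1 : ℚ) < k - lam := by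
    rw [lt_sub_iff_add_lt]; exact_mod_cast (by omega : 1 + lam < k)
  have hcN : ((k : ℚ) - lam) • (fun b => (c b : ℚ)) = incidenceMatrix ℚ B *ᵥ u :=
    smul_eq_mulVec_of_vecMul_eq (Fintype.equivOfCardEq (by simp [hcard])) (by linarith)
      (by positivity) (transpose_incidenceMatrix_mul_self ℚ hk hlam hcard (by omega))
      (by simp [hu]) hc
  have hc0 (b : B) : c b = 0 := by
    apply Int.eq_zero_of_abs_mul_le_one hkl'
    have := abs_incidenceMatrix_mulVec_single_sub_single_le_one ℚ (B := B) X Y b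
    rwa [← hu, ← hcN] at this
  have huY : u Y = 1 := by simp [hu, Ne.symm hne]
  simp [← hc, hc0, ← Pi.zero_def, zero_vecMul] at huY
end

section
/- Let V be an n-dimensional vector space over the Galois field GF(q), where q = p^m with p prime, and let k be a multiple of p with 2 < k < q^n. Let B be the family of all k-element subsets of V whose elements sum to zero. Then (V, B) is a 2-(q^n, k, λ) design: there is a constant λ such that every pair of distinct vectors of V is contained in exactly λ members of B. -/
/-!
Over a field of characteristic `p` with `p ∣ k`, an affine bijection `w ↦ L w + c` sends a
`k`-set with sum `σ` to one with sum `L σ + k • c = L σ`, so it permutes the zero-sum `k`-sets.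
The affine group is 2-transitive on points, hence the number of zero-sum `k`-sets through two
distinct points does not depend on the points.
-/

open Finset

theorem exists_linearEquiv_apply_eq {K V : Type*} [Field K] [AddCommGroup V] [Module K V]
    {v w : V} (hv : v ≠ 0) (hw : w ≠ 0) : ∃ L : V ≃ₗ[K] V, L v = w := by
  let f := LinearEquiv.coord K V v hv ≪≫ₗ LinearEquiv.toSpanNonzeroSingleton K V w hw
  obtain ⟨L, hL⟩ := Submodule.exists_linearEquiv_restrict_eq f
  exact ⟨L, by simpa [f, LinearEquiv.coord_self] using
    (hL ⟨v, Submodule.mem_span_singleton_self v⟩).symm⟩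

theorem AffineEquiv.exists_apply_eq_and_apply_eq {K V P : Type*} [Field K] [AddCommGroup V]
    [Module K V] [AddTorsor V P] {x₀ y₀ x y : P} (h₀ : x₀ ≠ y₀) (h : x ≠ y) :
    ∃ e : P ≃ᵃ[K] P, e x₀ = x ∧ e y₀ = y := by
  obtain ⟨L, hL⟩ := exists_linearEquiv_apply_eq (K := K)
    (vsub_ne_zero.2 h₀.symm) (vsub_ne_zero.2 h.symm)
  refine ⟨(AffineEquiv.vaddConst K x₀).symm.trans
    (L.toAffineEquiv.trans (AffineEquiv.vaddConst K x)), ?_, ?_⟩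
  · simp
  · simp [hL]

theorem AffineMap.sum_apply {R V W : Type*} [Ring R] [AddCommGroup V] [Module R V]
    [AddCommGroup W] [Module R W] (f : V →ᵃ[R] W) {ι : Type*} (s : Finset ι) (v : ι → V) :
    ∑ i ∈ s, f (v i) = f.linear (∑ i ∈ s, v i) + #s • f 0 := by
  conv_lhs => rw [f.decomp]
  simp [sum_add_distrib, map_sum]

theorem AffineEquiv.sum_apply_eq_zero_iff {R V W : Type*} [Ring R] [AddCommGroup V] [Module R V]
    [AddCommGroup W] [Module R W] (e : V ≃ᵃ[R] W) {s : Finset V} (hs : (#s : R) = 0) :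
    ∑ w ∈ s, e w = 0 ↔ ∑ w ∈ s, w = 0 := by
  rw [← e.coe_toAffineMap, AffineMap.sum_apply, ← Nat.cast_smul_eq_nsmul R, hs, zero_smul,
    add_zero]
  exact e.linear.map_eq_zero_iff

theorem card_filter_zeroSum_mem_affineEquiv {R V : Type*} [Ring R] [AddCommGroup V] [Module R V]
    [Fintype V] [DecidableEq V] {k : ℕ} (hk : (k : R) = 0) (e : V ≃ᵃ[R] V) (x y : V) :
    #{s : Finset V | #s = k ∧ ∑ w ∈ s, w = 0 ∧ e x ∈ s ∧ e y ∈ s} =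
      #{s : Finset V | #s = k ∧ ∑ w ∈ s, w = 0 ∧ x ∈ s ∧ y ∈ s} := by
  refine (card_equiv e.toEquiv.finsetCongr fun s => ?_).symm
  simp only [mem_filter_univ, Equiv.finsetCongr_apply, card_map, sum_map, mem_map_equiv]
  refine and_congr_right fun hs => ?_
  rw [← e.sum_apply_eq_zero_iff (hs ▸ hk)]
  simp

theorem exists_card_filter_zeroSum_mem_eq {K V : Type*} [Field K] [AddCommGroup V] [Module K V]
    [Fintype V] [DecidableEq V] {k : ℕ} (hk : (k : K) = 0) :
    ∃ lam : ℕ, ∀ x y : V, x ≠ y →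
      #{s : Finset V | #s = k ∧ ∑ w ∈ s, w = 0 ∧ x ∈ s ∧ y ∈ s} = lam := by
  rcases subsingleton_or_nontrivial V with _ | _
  · exact ⟨0, fun x y h => absurd (Subsingleton.elim x y) h⟩
  obtain ⟨x₀, y₀, h₀⟩ := exists_pair_ne V
  refine ⟨#{s : Finset V | #s = k ∧ ∑ w ∈ s, w = 0 ∧ x₀ ∈ s ∧ y₀ ∈ s}, fun x y h => ?_⟩
  obtain ⟨e, rfl, rfl⟩ := AffineEquiv.exists_apply_eq_and_apply_eq (K := K) h₀ h
  exact card_filter_zeroSum_mem_affineEquiv hk e x₀ y₀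

theorem stmt_8_general (F : Type*) [Field F] [Fintype F] [DecidableEq F]
    (p m : ℕ) (hp : p.Prime) (hcard : Fintype.card F = p ^ m)
    (n k : ℕ) (hpk : p ∣ k) :
    ∃ lam : ℕ, ∀ x y : Fin n → F, x ≠ y →
      (Finset.univ.filter (fun s : Finset (Fin n → F) =>
        s.card = k ∧ (∑ w ∈ s, w) = 0 ∧ x ∈ s ∧ y ∈ s)).card = lam := by
  have := Fact.mk hp
  have := charP_of_card_eq_prime_pow hcard
  exact exists_card_filter_zeroSum_mem_eq ((CharP.cast_eq_zero_iff F p k).2 hpk)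

/-- Let V = GF(q)ⁿ with q = p^m, p prime, and let p ∣ k with
2 < k < qⁿ. The family B of k-subsets of V with zero sum is a 2-(qⁿ,k,λ)
design: every pair of distinct vectors lies in exactly λ members of B. -/
theorem stmt_8 (F : Type*) [Field F] [Fintype F] [DecidableEq F]
    (p m : ℕ) (hp : p.Prime) (hcard : Fintype.card F = p ^ m)
    (n k : ℕ) (hpk : p ∣ k) (h2 : 2 < k) (hlt : k < Fintype.card F ^ n) :
    ∃ lam : ℕ, ∀ x y : Fin n → F, x ≠ y →
      (Finset.univ.filter (fun s : Finset (Fin n → F) =>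
        s.card = k ∧ (∑ w ∈ s, w) = 0 ∧ x ∈ s ∧ y ∈ s)).card = lam :=
  stmt_8_general F p m hp hcard n k hpk
end

section
/- Let S be a set of eight pairwise distinct vectors of 𝔽_2^5. Then the elements of S sum to zero if and only if S is the disjoint union of two affine planes of 𝔽_2^5, i.e., S = (a + W) ∪ (a' + W') for cosets of 2-dimensional linear subspaces W, W' with (a + W) ∩ (a' + W') = ∅. -/
/-!
Four distinct points of an `𝔽₂`-vector space with zero sum are exactly an affine plane
`{a, a + u, a + v, a + u + v}`, so it suffices to find four points of `S` with zero sum (the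
other four then sum to zero as well). Attach to each subset `A ⊆ S` its sum together with the
parity of `#A`: there are `2⁸` subsets but only `2⁶` values, so three subsets `A, B, C` share a
value. Then `X = A ∆ B`, `Y = A ∆ C` and `X ∆ Y` are nonempty zero-sum subsets of `S` of even
size, hence of size at least 4 because the points are distinct. Every point of `S` lies in
exactly 0 or 2 of them, so their sizes add up to at most 16 and one of them has size 4.
-/

open Finset Module
open scoped symmDiff

theorem Finset.card_add_card_add_card_symmDiff {α : Type*} [DecidableEq α] (s t : Finset α) :
    #s + #t + #(s ∆ t) = 2 * #(s ∪ t) := by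
  rw [symmDiff_eq_sup_sdiff_inf]
  have := card_sdiff_of_subset (inter_subset_union : s ∩ t ⊆ s ∪ t)
  have := card_union_add_card_inter s t
  have := card_le_card (inter_subset_union : s ∩ t ⊆ s ∪ t)
  simp only [sup_eq_union, inf_eq_inter] at *
  omega

section CharTwo

variable {M : Type*} [AddCommGroup M] [Module (ZMod 2) M]

theorem ZModModule.sum_symmDiff {ι : Type*} [DecidableEq ι] (f : ι → M)
    (s t : Finset ι) : ∑ i ∈ s ∆ t, f i = ∑ i ∈ s, f i + ∑ i ∈ t, f i := by
  have h := sum_sdiff (f := f) (inter_subset_union : s ∩ t ⊆ s ∪ t)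
  rw [← sum_union_inter, ← h, symmDiff_eq_sup_sdiff_inf, add_assoc, ZModModule.add_self,
    add_zero]
  rfl

theorem ZModModule.coe_span_pair (u v : M) :
    (Submodule.span (ZMod 2) {u, v} : Set M) = {0, u, v, u + v} := by
  ext x
  simp only [SetLike.mem_coe, Submodule.mem_span_pair, Set.mem_insert_iff,
    Set.mem_singleton_iff]
  constructor
  · rintro ⟨s, t, rfl⟩
    have h01 : ∀ r : ZMod 2, r = 0 ∨ r = 1 := by decide
    rcases h01 s with rfl | rfl <;> rcases h01 t with rfl | rfl <;> simp
  · rintro (rfl | rfl | rfl | rfl)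
    exacts [⟨0, 0, by simp⟩, ⟨1, 0, by simp⟩, ⟨0, 1, by simp⟩, ⟨1, 1, by simp⟩]

theorem ZModModule.four_nsmul_eq_zero (a : M) : 4 • a = 0 := by
  rw [show 4 = 2 * 2 from rfl, mul_nsmul, two_nsmul, ZModModule.add_self]

end CharTwo

section EightPoints

variable {V : Type*} [AddCommGroup V]

def sumAndParity (A : Finset V) : V × ZMod 2 := ∑ x ∈ A, (x, 1)

theorem sumAndParity_eq_zero_iff {A : Finset V} :
    sumAndParity A = 0 ↔ ∑ x ∈ A, x = 0 ∧ Even #A := by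
  simp [sumAndParity, Prod.ext_iff, Prod.fst_sum, Prod.snd_sum,
    ZMod.natCast_eq_zero_iff_even]

variable [Module (ZMod 2) V] [DecidableEq V]

theorem sumAndParity_symmDiff (A B : Finset V) :
    sumAndParity (A ∆ B) = sumAndParity A + sumAndParity B :=
  ZModModule.sum_symmDiff _ A B

theorem card_eq_four_or_six_le_of_sumAndParity_eq_zero {A : Finset V} (hA : A.Nonempty)
    (h : sumAndParity A = 0) : #A = 4 ∨ 6 ≤ #A := by
  obtain ⟨hsum, k, hk⟩ := sumAndParity_eq_zero_iff.1 h
  have hne2 : #A ≠ 2 := by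
    intro h2
    obtain ⟨x, y, hxy, rfl⟩ := card_eq_two.1 h2
    rw [sum_pair hxy, add_eq_zero_iff_eq_neg, ZModModule.neg_eq_self] at hsum
    exact hxy hsum
  have := hA.card_pos
  omega

theorem exists_subset_card_eq_four_sum_eq_zero [Fintype V] (hV : Fintype.card V ≤ 32)
    {S : Finset V} (hS : #S = 8) : ∃ T ⊆ S, #T = 4 ∧ ∑ x ∈ T, x = 0 := by
  obtain ⟨y, -, hy⟩ := exists_lt_card_fiber_of_mul_lt_card_of_maps_to
    (s := S.powerset) (t := univ) (f := sumAndParity) (n := 2) (fun _ _ => mem_univ _)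
    (by simp [card_powerset, hS]; omega)
  obtain ⟨A, B, C, hA, hB, hC, hAB, hAC, hBC⟩ := two_lt_card_iff.1 hy
  simp only [mem_filter, mem_powerset] at hA hB hC
  have hX : sumAndParity (A ∆ B) = 0 := by
    rw [sumAndParity_symmDiff, hA.2, hB.2, ZModModule.add_self]
  have hY : sumAndParity (A ∆ C) = 0 := by
    rw [sumAndParity_symmDiff, hA.2, hC.2, ZModModule.add_self]
  have hXY : sumAndParity ((A ∆ B) ∆ (A ∆ C)) = 0 := by
    rw [sumAndParity_symmDiff, hX, hY, add_zero]
  by_contra! hno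
  have six_le : ∀ Z ⊆ S, Z.Nonempty → sumAndParity Z = 0 → 6 ≤ #Z := fun Z hZS hZ hZ0 =>
    (card_eq_four_or_six_le_of_sumAndParity_eq_zero hZ hZ0).resolve_left
      fun h4 => hno Z hZS h4 (sumAndParity_eq_zero_iff.1 hZ0).1
  have hXS : A ∆ B ⊆ S := symmDiff_subset_union.trans (union_subset hA.1 hB.1)
  have hYS : A ∆ C ⊆ S := symmDiff_subset_union.trans (union_subset hA.1 hC.1)
  have h1 := six_le _ hXS (symmDiff_nonempty.2 hAB) hX
  have h2 := six_le _ hYS (symmDiff_nonempty.2 hAC) hY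
  have h3 := six_le _ (symmDiff_subset_union.trans (union_subset hXS hYS))
    (symmDiff_nonempty.2 (by rwa [Ne, symmDiff_right_inj])) hXY
  have h4 := card_add_card_add_card_symmDiff (A ∆ B) (A ∆ C)
  have h5 := card_le_card (union_subset hXS hYS)
  omega

end EightPoints

section Planes

variable {V : Type*} [AddCommGroup V] [Module (ZMod 2) V]

def IsAffinePlane (P : Set V) : Prop :=
  ∃ (W : Submodule (ZMod 2) V) (a : V), finrank (ZMod 2) W = 2 ∧ P = (a + ·) '' W

theorem ZModModule.sum_submodule_eq_zero_of_finrank_eq_two {W : Submodule (ZMod 2) V}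
    [Fintype W] (hW : finrank (ZMod 2) W = 2) : ∑ w : W, (w : V) = 0 := by
  let e := (Module.finBasisOfFinrankEq (ZMod 2) W hW).equivFun
  rw [← e.symm.toEquiv.sum_comp]
  simpa using congrArg (fun c ↦ (e.symm c : V))
    (show ∑ c : Fin 2 → ZMod 2, c = 0 by decide)

variable [Finite V]

theorem natCard_image_add_left_submodule (W : Submodule (ZMod 2) V) (a : V) :
    Nat.card ((a + ·) '' (W : Set V)) = 2 ^ finrank (ZMod 2) W := by
  rw [Nat.card_image_of_injective (add_right_injective a), SetLike.coe_sort_coe,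
    Module.natCard_eq_pow_finrank (K := ZMod 2), Nat.card_zmod]

variable [DecidableEq V]

theorem isAffinePlane_coe_iff {T : Finset V} :
    IsAffinePlane (T : Set V) ↔ #T = 4 ∧ ∑ x ∈ T, x = 0 := by
  constructor
  · rintro ⟨W, a, hW, hT⟩
    have hcard : #T = 4 := by
      rw [← Set.ncard_coe_finset, ← Nat.card_coe_set_eq, hT, natCard_image_add_left_submodule,
        hW]
      rfl
    have := Fintype.ofFinite W
    have hinj : Function.Injective (fun w : W => a + (w : V)) :=
      (add_right_injective a).comp Subtype.val_injective
    have hTW : T = univ.image (fun w : W => a + (w : V)) := coe_injective <| by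
      rw [hT, coe_image, coe_univ, Set.image_univ, Set.range_comp', Subtype.range_coe]
    refine ⟨hcard, ?_⟩
    rw [hTW, sum_image hinj.injOn, sum_add_distrib, sum_const,
      ← card_image_of_injective univ hinj, ← hTW, hcard, ZModModule.four_nsmul_eq_zero,
      zero_add, ZModModule.sum_submodule_eq_zero_of_finrank_eq_two hW]
  · rintro ⟨hT4, hT0⟩
    obtain ⟨a, b, c, d, hab, hac, had, hbc, hbd, hcd, rfl⟩ := card_eq_four.1 hT4
    have hd : d = a + b + c := by
      rw [sum_insert (by simp [hab, hac, had]), sum_insert (by simp [hbc, hbd]),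
        sum_pair hcd] at hT0
      rw [← sub_eq_zero, ZModModule.sub_eq_add, ← hT0]
      abel
    have hplane : (({a, b, c, d} : Finset V) : Set V) =
        (a + ·) '' (Submodule.span (ZMod 2) {a + b, a + c} : Set V) := by
      rw [ZModModule.coe_span_pair, hd]
      simp only [Set.image_insert_eq, Set.image_singleton, add_zero, ← add_assoc,
        ZModModule.add_self, zero_add, coe_insert, coe_singleton, add_comm b a]
    refine ⟨_, a, ?_, hplane⟩
    apply Nat.pow_right_injective le_rfl
    show 2 ^ _ = 2 ^ 2
    rw [← natCard_image_add_left_submodule _ a, ← hplane, Nat.card_coe_set_eq,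
      Set.ncard_coe_finset]
    simpa using hT4

end Planes

/-- A set of eight pairwise distinct vectors of 𝔽₂⁵ sums to zero
iff it is the disjoint union of two affine planes (cosets of 2-dimensional
linear subspaces) of 𝔽₂⁵. -/
theorem stmt_15 (S : Finset (Fin 5 → ZMod 2)) (hcard : S.card = 8) :
    (∑ x ∈ S, x) = 0 ↔
    ∃ (W W' : Submodule (ZMod 2) (Fin 5 → ZMod 2)) (a a' : Fin 5 → ZMod 2),
      Module.finrank (ZMod 2) W = 2 ∧ Module.finrank (ZMod 2) W' = 2 ∧
      (S : Set (Fin 5 → ZMod 2)) =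
        ((a + ·) '' (W : Set (Fin 5 → ZMod 2))) ∪
          ((a' + ·) '' (W' : Set (Fin 5 → ZMod 2))) ∧
      Disjoint ((a + ·) '' (W : Set (Fin 5 → ZMod 2)))
        ((a' + ·) '' (W' : Set (Fin 5 → ZMod 2))) := by
  constructor
  · intro hsum
    obtain ⟨T, hTS, hT4, hT0⟩ := exists_subset_card_eq_four_sum_eq_zero (by simp) hcard
    have hc4 : #(S \ T) = 4 := by rw [card_sdiff_of_subset hTS, hcard, hT4]
    have hc0 : ∑ x ∈ S \ T, x = 0 := by
      rwa [← sum_sdiff hTS, hT0, add_zero] at hsum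
    obtain ⟨W, a, hW, hTW⟩ := isAffinePlane_coe_iff.2 ⟨hT4, hT0⟩
    obtain ⟨W', a', hW', hTW'⟩ := isAffinePlane_coe_iff.2 ⟨hc4, hc0⟩
    refine ⟨W, W', a, a', hW, hW', ?_, ?_⟩
    · rw [← hTW, ← hTW', ← coe_union, union_sdiff_of_subset hTS]
    · rw [← hTW, ← hTW', disjoint_coe]
      exact disjoint_sdiff
  · rintro ⟨W, W', a, a', hW, hW', hS, hdisj⟩
    set P := (a + ·) '' (W : Set (Fin 5 → ZMod 2))
    set P' := (a' + ·) '' (W' : Set (Fin 5 → ZMod 2))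
    have hP := (Set.toFinite P).coe_toFinset
    have hP' := (Set.toFinite P').coe_toFinset
    have hSP : S = (Set.toFinite P).toFinset ∪ (Set.toFinite P').toFinset :=
      coe_injective (by rw [coe_union, hP, hP', hS])
    rw [hSP, sum_union (by rwa [← disjoint_coe, hP, hP']),
      (isAffinePlane_coe_iff.1 ⟨W, a, hW, hP⟩).2,
      (isAffinePlane_coe_iff.1 ⟨W', a', hW', hP'⟩).2, add_zero]
end
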